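/- arXiv:1603.03092 — 5 statements merged into one kernel-verified Lean document; each statement's English description precedes it below -/
import Mathlib

section
/- In an inverse category, the level function l on objects is well-defined: for every object K, l(K) is a natural number, where l(K) = 0 if the only arrow with domain K is the identity, and otherwise l(K) = 1 + sup over non-identity arrows f out of K of l(cod f). -/
open CategoryTheory
open scoped Classical

noncomputable def levelAux {C : Type*} {r : C → C → Prop} (wf : WellFounded r) : C → ℕ :=
  wf.fix fun K ih =>
    if ∃ K', r K' K then sSup {n | ∃ K', ∃ h : r K' K, n = ih K' h} + 1 else 0

lemma levelAux_eq {C : Type*} {r : C → C → Prop} (wf : WellFounded r) (K : C) :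
    levelAux wf K =
      if ∃ K', r K' K then
        sSup {n | ∃ K', r K' K ∧ n = levelAux wf K'} + 1 else 0 := by
  have hset : {n | ∃ K', ∃ _h : r K' K, n = levelAux wf K'}
      = {n | ∃ K', r K' K ∧ n = levelAux wf K'} := by
    ext n; exact exists_congr fun K' => exists_prop
  rw [levelAux, WellFounded.fix_eq]
  show (if ∃ K', r K' K then
      sSup {n | ∃ K', ∃ _h : r K' K, n = levelAux wf K'} + 1 else 0) = _
  rw [hset]; rfl

/-- In an inverse category (skeletal, no non-identity endomorphisms,
finite fan-out), the level function `l` on objects is well-defined: there is a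
function `l : C → ℕ` with `l K = 0` if the only arrow out of `K` is the identity,
and otherwise `l K = (sup of l(cod f) over non-identity arrows f out of K) + 1`.
(Since every endomorphism is the identity, the non-identity arrows out of `K` are
exactly the arrows `K ⟶ K'` with `K' ≠ K`.) -/
theorem inverse_category_level_well_defined
    (C : Type*) [Category C]
    (hskel : Skeletal C)
    (hendo : ∀ (K : C) (f : K ⟶ K), f = 𝟙 K)
    (hfan : ∀ K : C, Finite (Σ K' : C, K ⟶ K')) :
    ∃ l : C → ℕ, ∀ K : C,
      l K = if (∃ K' : C, K' ≠ K ∧ Nonempty (K ⟶ K'))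
        then sSup {n : ℕ | ∃ K' : C, K' ≠ K ∧ Nonempty (K ⟶ K') ∧ n = l K'} + 1
        else 0 := by
  set r : C → C → Prop := fun K' K => K' ≠ K ∧ Nonempty (K ⟶ K') with hr
  -- antisymmetry
  have antisym : ∀ K K' : C, Nonempty (K ⟶ K') → Nonempty (K' ⟶ K) → K = K' := by
    intro K K' ⟨f⟩ ⟨g⟩
    exact hskel ⟨⟨f, g, hendo _ _, hendo _ _⟩⟩
  -- the set of codomains reachable from K is finite
  have Sfin : ∀ K : C, ({K' : C | Nonempty (K ⟶ K')}).Finite := by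
    intro K
    haveI := hfan K
    have hs : Function.Surjective
        (fun p : (Σ K' : C, K ⟶ K') => (⟨p.1, ⟨p.2⟩⟩ : {K' : C | Nonempty (K ⟶ K')})) := by
      rintro ⟨K', ⟨f⟩⟩
      exact ⟨⟨K', f⟩, rfl⟩
    haveI : Finite ↥{K' : C | Nonempty (K ⟶ K')} := Finite.of_surjective _ hs
    exact Set.toFinite _
  -- the measure strictly decreases along r
  have hdec : ∀ K' K : C, r K' K →
      ({K'' : C | Nonempty (K' ⟶ K'')}).ncard < ({K'' : C | Nonempty (K ⟶ K'')}).ncard := by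
    intro K' K ⟨hne, ⟨f⟩⟩
    apply Set.ncard_lt_ncard _ (Sfin K)
    constructor
    · rintro x ⟨g⟩
      exact ⟨f ≫ g⟩
    · intro hsub
      have hK : K ∈ {K'' : C | Nonempty (K ⟶ K'')} := ⟨𝟙 K⟩
      have : Nonempty (K' ⟶ K) := hsub hK
      exact hne (antisym K' K this ⟨f⟩)
  have wf : WellFounded r := by
    have := InvImage.wf (fun K : C => ({K'' : C | Nonempty (K ⟶ K'')}).ncard)
      (Nat.lt_wfRel.wf)
    exact Subrelation.wf (fun {K' K} h => hdec K' K h) this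
  refine ⟨levelAux wf, fun K => ?_⟩
  have hset : {n | ∃ K', r K' K ∧ n = levelAux wf K'}
      = {n : ℕ | ∃ K' : C, K' ≠ K ∧ Nonempty (K ⟶ K') ∧ n = levelAux wf K'} := by
    ext n; simp only [hr, Set.mem_setOf_eq, and_assoc]
  rw [levelAux_eq wf K, hset]
end

section
/- In an inverse category, the relation on objects given by 'there exists a non-identity arrow from K to K'' is well-founded (equivalently, there is no infinite sequence of composable non-identity arrows). -/
open CategoryTheory

/-- In an inverse category, the relation on objects given by
"there exists a non-identity arrow from `K` to `K'`" is well-founded (the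
object `K'` reached by a non-identity arrow counts as smaller).  Since all
endomorphisms are identities, a non-identity arrow out of `K` is exactly an
arrow `K ⟶ K'` with `K' ≠ K`. -/
theorem inverse_category_wellFounded
    (C : Type*) [Category C]
    (hskel : Skeletal C)
    (hendo : ∀ (K : C) (f : K ⟶ K), f = 𝟙 K)
    (hfan : ∀ K : C, Finite (Σ K' : C, K ⟶ K')) :
    WellFounded (fun K' K : C => K' ≠ K ∧ Nonempty (K ⟶ K')) := by
  have hiso : ∀ {a b : C}, (a ⟶ b) → (b ⟶ a) → a = b := fun {a b} p q =>
    hskel ⟨{ hom := p, inv := q, hom_inv_id := hendo _ _, inv_hom_id := hendo _ _ }⟩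
  haveI : IsIrrefl C (fun K' K : C => K' ≠ K ∧ Nonempty (K ⟶ K')) :=
    ⟨fun a h => h.1 rfl⟩
  haveI : IsTrans C (fun K' K : C => K' ≠ K ∧ Nonempty (K ⟶ K')) := by
    constructor
    rintro a b c ⟨hab, ⟨p⟩⟩ ⟨hbc, ⟨q⟩⟩
    refine ⟨fun h => ?_, ⟨q ≫ p⟩⟩
    subst h
    exact hab (hiso q p)
  haveI : IsStrictOrder C (fun K' K : C => K' ≠ K ∧ Nonempty (K ⟶ K')) := ⟨⟩
  rw [RelEmbedding.wellFounded_iff_isEmpty]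
  constructor
  intro e
  set f : ℕ → C := fun n => e n with hf
  have hstep : ∀ n, f (n+1) ≠ f n ∧ Nonempty (f n ⟶ f (n+1)) := fun n =>
    e.map_rel_iff.2 (Nat.lt_succ_self n)
  choose hne harr using hstep
  have g : ∀ n, f n ⟶ f (n+1) := fun n => (harr n).some
  -- composites from `f m` to `f (m+k)`
  have d : ∀ m k, f m ⟶ f (m+k) := by
    intro m k
    induction k with
    | zero => exact 𝟙 _
    | succ k ih => exact ih ≫ g (m+k)
  -- f is injective
  have hinj : Function.Injective f := by
    have key : ∀ m k, f m = f (m + (k+1)) → False := by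
      intro m k h
      have b : f (m+1) ⟶ f m := by
        have : f ((m+1) + k) = f m := by rw [h]; congr 1; omega
        exact d (m+1) k ≫ eqToHom this
      have iso : IsIsomorphic (f m) (f (m+1)) :=
        ⟨{ hom := g m, inv := b, hom_inv_id := hendo _ _, inv_hom_id := hendo _ _ }⟩
      exact hne m (hskel iso).symm
    intro a b hab
    by_contra hne'
    rcases Nat.lt_or_ge a b with h | h
    · obtain ⟨k, rfl⟩ : ∃ k, b = a + (k+1) := ⟨b - a - 1, by omega⟩
      exact key a k hab
    · have h' : b < a := lt_of_le_of_ne h (Ne.symm hne')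
      obtain ⟨k, rfl⟩ : ∃ k, a = b + (k+1) := ⟨a - b - 1, by omega⟩
      exact key b k hab.symm
  -- infinitely many distinct arrows out of f 0, contradiction
  have := hfan (f 0)
  have Finj : Function.Injective (fun n => (⟨f (0+n), d 0 n⟩ : Σ K' : C, f 0 ⟶ K')) := by
    intro a b hab
    have : f (0+a) = f (0+b) := congrArg Sigma.fst hab
    simpa using hinj this
  obtain ⟨a, b, hab, heq⟩ := Finite.exists_ne_map_eq_of_infinite
    (fun n => (⟨f (0+n), d 0 n⟩ : Σ K' : C, f 0 ⟶ K'))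
  exact hab (Finj heq)
end

section
/- Every inverse category admits a proper order: a pair (<_o, <_m) where <_o is a partial order on objects such that the existence of a non-identity arrow f : K → K_f implies K_f <_o K, and <_m is a partial order on morphisms such that f <_m g whenever cod f <_o cod g. -/
open CategoryTheory

/-- Every inverse category admits a proper order: a strict partial
order `<ₒ` on objects such that the existence of a non-identity arrow
`f : K ⟶ K_f` implies `K_f <ₒ K`, together with a strict partial order `<ₘ` on
the (total) morphisms such that `f <ₘ g` whenever `cod f <ₒ cod g`. -/
theorem inverse_category_proper_order
    (C : Type*) [Category C]
    (hskel : Skeletal C)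
    (hendo : ∀ (K : C) (f : K ⟶ K), f = 𝟙 K)
    (hfan : ∀ K : C, Finite (Σ K' : C, K ⟶ K')) :
    ∃ (lto : C → C → Prop)
      (ltm : (Σ (K K' : C), K ⟶ K') → (Σ (K K' : C), K ⟶ K') → Prop),
      IsStrictOrder C lto ∧
      IsStrictOrder (Σ (K K' : C), K ⟶ K') ltm ∧
      (∀ (K K' : C), (K ⟶ K') → K' ≠ K → lto K' K) ∧
      (∀ f g : Σ (K K' : C), K ⟶ K', lto f.2.1 g.2.1 → ltm f g) := by
  set r : C → C → Prop := fun a b => Nonempty (b ⟶ a) ∧ a ≠ b with hr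
  set lto : C → C → Prop := Relation.TransGen r with hlto
  -- any transgen chain yields a morphism backwards
  have hmor : ∀ a b : C, lto a b → Nonempty (b ⟶ a) := by
    intro a b h
    induction h with
    | single h => exact h.1
    | tail _ h ih => exact ⟨h.1.some ≫ ih.some⟩
  have hirr : ∀ a : C, ¬ lto a a := by
    intro a h
    cases h with
    | single h1 => exact h1.2 rfl
    | @tail c _ h1 h2 =>
      obtain ⟨g⟩ := hmor _ _ h1
      obtain ⟨f⟩ := h2.1
      have e1 : f ≫ g = 𝟙 a := hendo a _
      have e2 : g ≫ f = 𝟙 c := hendo c _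
      exact h2.2 (hskel ⟨⟨g, f, e2, e1⟩⟩)
  refine ⟨lto, fun f g => lto f.2.1 g.2.1,
    @IsStrictOrder.mk _ _ ⟨hirr⟩ ⟨fun _ _ _ => Relation.TransGen.trans⟩,
    @IsStrictOrder.mk _ _ ⟨fun f => hirr f.2.1⟩ ⟨fun _ _ _ => Relation.TransGen.trans⟩,
    ?_, fun _ _ h => h⟩
  intro K K' f hne
  exact Relation.TransGen.single ⟨⟨f⟩, hne⟩
end

section
/- If two FOLDS signatures L and L' are isomorphic as ordered inverse categories, then their logical type theories LTT_L and LTT_{L'} are bi-interpretable, i.e., isomorphic in the category of ML type theories and interpretations. -/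
/-! Syntactic type theory `TT_L` of a FOLDS signature `L`. A FOLDS signature is
encoded by its sorts, the (non-identity) arrows out of each sort, their
codomains and composition (`comp f p = p ∘ f`). A sort expression `A(x_f)` is a
head sort together with an assignment of variables to the arrows out of it. -/

structure FOLDSSig where
  S : Type
  Arr : S → Type
  cod : ∀ {A : S}, Arr A → S
  comp : ∀ {A : S} (f : Arr A), Arr (cod f) → Arr A
  lt : S → S → Prop  -- the proper order on sorts

abbrev FOLDSVar := ℕ

structure SortExpr (L : FOLDSSig) where
  head : L.S
  args : L.Arr head → FOLDSVar

abbrev FOLDSCon (L : FOLDSSig) := List (FOLDSVar × SortExpr L)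

def varsCon {L : FOLDSSig} (Γ : FOLDSCon L) : List FOLDSVar := Γ.map Prod.fst

/-- The sort `K_f(x_{pf})` required of the variable in position `f` of the
sort expression `K`. -/
def argSort {L : FOLDSSig} (K : SortExpr L) (f : L.Arr K.head) : SortExpr L :=
  ⟨L.cod f, fun p => K.args (L.comp f p)⟩

inductive Jud (L : FOLDSSig) where
  | conOk : FOLDSCon L → Jud L
  | isSort : FOLDSCon L → SortExpr L → Jud L
  | hasType : FOLDSCon L → FOLDSVar → SortExpr L → Jud L

/-- The derivable judgments of `TT_L`: empty context, context extension with a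
fresh variable, weakening for sorts, the axiom rule, and the sort formation
rule `(K-form)` for each sort of `L`. -/
inductive Derive (L : FOLDSSig) : Jud L → Prop where
  | conNil : Derive L (.conOk [])
  | conExt {Γ K x} : Derive L (.conOk Γ) → Derive L (.isSort Γ K) →
      x ∉ varsCon Γ → Derive L (.conOk (Γ ++ [(x, K)]))
  | conWk {Γ Δ K} : Derive L (.conOk (Γ ++ Δ)) → Derive L (.isSort Γ K) →
      Derive L (.isSort (Γ ++ Δ) K)
  | ax {Γ Δ x K} : Derive L (.conOk (Γ ++ (x, K) :: Δ)) →
      Derive L (.hasType (Γ ++ (x, K) :: Δ) x K)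
  | form {Γ} (A : L.S) (args : L.Arr A → FOLDSVar) :
      Derive L (.conOk Γ) →
      (∀ f : L.Arr A, Derive L (.hasType Γ (args f) (argSort ⟨A, args⟩ f))) →
      Derive L (.isSort Γ ⟨A, args⟩)


def substSort {L : FOLDSSig} (σ : FOLDSVar → FOLDSVar) (K : SortExpr L) : SortExpr L :=
  ⟨K.head, fun f => σ (K.args f)⟩

def CtxMor {L : FOLDSSig} (σ : FOLDSVar → FOLDSVar) (Γ Δ : FOLDSCon L) : Prop :=
  ∀ p ∈ Δ, Derive L (.hasType Γ (σ p.1) (substSort σ p.2))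

/-- Formulas of the logical type theory `LTT_L`. -/
inductive Fml (L : FOLDSSig) where
  | bot | top
  | and (φ ψ : Fml L)
  | or (φ ψ : Fml L)
  | imp (φ ψ : Fml L)
  | all (x : FOLDSVar) (K : SortExpr L) (φ : Fml L)
  | ex (x : FOLDSVar) (K : SortExpr L) (φ : Fml L)

/-- The formula judgment `Γ ⊢ φ formula` of `LTT_L`: formation rules for
`⊥, ⊤, ∧, ∨, →, ∀, ∃` and weakening. -/
inductive IsFml (L : FOLDSSig) : FOLDSCon L → Fml L → Prop where
  | bot {Γ} : Derive L (.conOk Γ) → IsFml L Γ .bot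
  | top {Γ} : Derive L (.conOk Γ) → IsFml L Γ .top
  | and {Γ φ ψ} : Derive L (.conOk Γ) → IsFml L Γ φ → IsFml L Γ ψ →
      IsFml L Γ (.and φ ψ)
  | or {Γ φ ψ} : Derive L (.conOk Γ) → IsFml L Γ φ → IsFml L Γ ψ →
      IsFml L Γ (.or φ ψ)
  | imp {Γ φ ψ} : Derive L (.conOk Γ) → IsFml L Γ φ → IsFml L Γ ψ →
      IsFml L Γ (.imp φ ψ)
  | all {Γ x K φ} : Derive L (.conOk Γ) → IsFml L (Γ ++ [(x, K)]) φ →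
      IsFml L Γ (.all x K φ)
  | ex {Γ x K φ} : Derive L (.conOk Γ) → IsFml L (Γ ++ [(x, K)]) φ →
      IsFml L Γ (.ex x K φ)
  | wk {Γ Δ φ} : Derive L (.conOk (Γ ++ Δ)) → IsFml L Γ φ →
      IsFml L (Γ ++ Δ) φ

/-- Substitution of variables in formulas (bound variables are left fixed). -/
def substFml {L : FOLDSSig} (σ : FOLDSVar → FOLDSVar) : Fml L → Fml L
  | .bot => .bot
  | .top => .top
  | .and φ ψ => .and (substFml σ φ) (substFml σ ψ)
  | .or φ ψ => .or (substFml σ φ) (substFml σ ψ)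
  | .imp φ ψ => .imp (substFml σ φ) (substFml σ ψ)
  | .all x K φ => .all x (substSort σ K) (substFml (Function.update σ x x) φ)
  | .ex x K φ => .ex x (substSort σ K) (substFml (Function.update σ x x) φ)


/-- An isomorphism of FOLDS signatures: bijections on sorts and on the arrows
out of each sort, commuting with codomains, composition and the proper
order. -/
structure SigIso (L L' : FOLDSSig) where
  obj : L.S ≃ L'.S
  arr : ∀ A : L.S, L.Arr A ≃ L'.Arr (obj A)
  cod_eq : ∀ (A : L.S) (f : L.Arr A), L'.cod ((arr A) f) = obj (L.cod f)
  comp_eq : ∀ (A : L.S) (f : L.Arr A) (p : L.Arr (L.cod f))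
      (q : L'.Arr (L'.cod ((arr A) f))),
      HEq ((arr (L.cod f)) p) q → (arr A) (L.comp f p) = L'.comp ((arr A) f) q
  lt_iff : ∀ A B : L.S, L.lt A B ↔ L'.lt (obj A) (obj B)


namespace BiInterp

variable {L L' : FOLDSSig}

theorem sortExprExt {M : FOLDSSig} {a a' : M.S} (h : a = a')
    {g : M.Arr a → FOLDSVar} {g' : M.Arr a' → FOLDSVar}
    (hg : ∀ q : M.Arr a', g (cast (by rw [h]) q) = g' q) :
    (⟨a, g⟩ : SortExpr M) = ⟨a', g'⟩ := by
  subst h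
  simp only [cast_eq] at hg
  exact congrArg _ (funext hg)

def mapSort (I : SigIso L L') (K : SortExpr L) : SortExpr L' :=
  ⟨I.obj K.head, fun f' => K.args ((I.arr K.head).symm f')⟩

def mapCon (I : SigIso L L') (Γ : FOLDSCon L) : FOLDSCon L' :=
  Γ.map (fun p => (p.1, mapSort I p.2))

def mapFml (I : SigIso L L') : Fml L → Fml L'
  | .bot => .bot
  | .top => .top
  | .and φ ψ => .and (mapFml I φ) (mapFml I ψ)
  | .or φ ψ => .or (mapFml I φ) (mapFml I ψ)
  | .imp φ ψ => .imp (mapFml I φ) (mapFml I ψ)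
  | .all x K φ => .all x (mapSort I K) (mapFml I φ)
  | .ex x K φ => .ex x (mapSort I K) (mapFml I φ)

theorem arr_congr (I : SigIso L L') {A B : L.S} (h : A = B) {x : L.Arr A}
    {y : L.Arr B} (hxy : HEq x y) : HEq ((I.arr A) x) ((I.arr B) y) := by
  subst h; cases hxy; rfl

theorem arr_symm_congr (I : SigIso L L') {A B : L.S} (h : A = B)
    {x : L'.Arr (I.obj A)} {y : L'.Arr (I.obj B)} (hxy : HEq x y) :
    HEq ((I.arr A).symm x) ((I.arr B).symm y) := by
  subst h; cases hxy; rfl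

theorem mapSort_argSort (I : SigIso L L') (K : SortExpr L) (f : L.Arr K.head) :
    mapSort I (argSort K f) = argSort (mapSort I K) ((I.arr K.head) f) := by
  apply sortExprExt ((I.cod_eq K.head f).symm)
  intro q
  show K.args (L.comp f ((I.arr (L.cod f)).symm (cast _ q)))
      = K.args ((I.arr K.head).symm (L'.comp ((I.arr K.head) f) q))
  congr 1
  apply (I.arr K.head).injective
  rw [Equiv.apply_symm_apply]
  refine I.comp_eq K.head f _ q ?_
  rw [Equiv.apply_symm_apply]
  exact cast_heq _ _

theorem varsCon_mapCon (I : SigIso L L') (Γ : FOLDSCon L) :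
    varsCon (mapCon I Γ) = varsCon Γ := by
  simp [varsCon, mapCon]

def mapJud (I : SigIso L L') : Jud L → Jud L'
  | .conOk Γ => .conOk (mapCon I Γ)
  | .isSort Γ K => .isSort (mapCon I Γ) (mapSort I K)
  | .hasType Γ x K => .hasType (mapCon I Γ) x (mapSort I K)

theorem derive_map (I : SigIso L L') {j : Jud L} (h : Derive L j) :
    Derive L' (mapJud I j) := by
  induction h with
  | conNil => exact .conNil
  | conExt _ _ hx ih1 ih2 =>
      have := Derive.conExt ih1 ih2 (by rwa [varsCon_mapCon])
      simpa [mapJud, mapCon] using this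
  | @conWk Γ Δ K _ _ ih1 ih2 =>
      have h1 : Derive L' (.conOk (mapCon I Γ ++ mapCon I Δ)) := by
        simpa [mapJud, mapCon] using ih1
      have := Derive.conWk h1 ih2
      simpa [mapJud, mapCon] using this
  | @ax Γ Δ x K _ ih =>
      have h1 : Derive L' (.conOk (mapCon I Γ ++ (x, mapSort I K) :: mapCon I Δ)) := by
        simpa [mapJud, mapCon] using ih
      have := Derive.ax h1
      simpa [mapJud, mapCon] using this
  | form A args _ _ ih1 ih2 =>
      refine Derive.form (I.obj A) (fun f' => args ((I.arr A).symm f')) ih1 ?_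
      intro f'
      have := ih2 ((I.arr A).symm f')
      rw [mapJud] at this
      rw [mapSort_argSort, Equiv.apply_symm_apply] at this
      exact this

theorem isFml_map (I : SigIso L L') {Γ : FOLDSCon L} {φ : Fml L}
    (h : IsFml L Γ φ) : IsFml L' (mapCon I Γ) (mapFml I φ) := by
  induction h with
  | bot hΓ => exact .bot (derive_map I hΓ)
  | top hΓ => exact .top (derive_map I hΓ)
  | and hΓ _ _ ih1 ih2 => exact .and (derive_map I hΓ) ih1 ih2
  | or hΓ _ _ ih1 ih2 => exact .or (derive_map I hΓ) ih1 ih2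
  | imp hΓ _ _ ih1 ih2 => exact .imp (derive_map I hΓ) ih1 ih2
  | all hΓ _ ih =>
      refine .all (derive_map I hΓ) ?_
      simpa [mapJud, mapCon] using ih
  | ex hΓ _ ih =>
      refine .ex (derive_map I hΓ) ?_
      simpa [mapJud, mapCon] using ih
  | @wk Γ Δ φ hΓ _ ih =>
      have h1 : Derive L' (.conOk (mapCon I Γ ++ mapCon I Δ)) := by
        simpa [mapJud, mapCon] using derive_map I hΓ
      have := IsFml.wk h1 ih
      simpa [mapCon] using this

theorem cod_heq_congr (M : FOLDSSig) {a b : M.S} (h : a = b) {x : M.Arr a}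
    {y : M.Arr b} (hxy : HEq x y) : M.cod x = M.cod y := by
  subst h; cases hxy; rfl

theorem comp_heq_congr (M : FOLDSSig) {a b : M.S} (h : a = b) {x : M.Arr a}
    {y : M.Arr b} (hxy : HEq x y) {p : M.Arr (M.cod x)} {q : M.Arr (M.cod y)}
    (hpq : HEq p q) : HEq (M.comp x p) (M.comp y q) := by
  subst h; cases hxy; cases hpq; rfl

theorem comp_eq' (I : SigIso L L') (A : L.S) (f : L.Arr A) (p : L.Arr (L.cod f)) :
    (I.arr A) (L.comp f p) = L'.comp ((I.arr A) f)
      (cast (congrArg L'.Arr (I.cod_eq A f)).symm ((I.arr (L.cod f)) p)) :=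
  I.comp_eq A f p _ ((cast_heq _ _).symm)

def symmArr (I : SigIso L L') (A' : L'.S) :
    L'.Arr A' ≃ L.Arr (I.obj.symm A') :=
  ((I.arr (I.obj.symm A')).trans
    (Equiv.cast (congrArg L'.Arr (I.obj.apply_symm_apply A')))).symm

theorem arr_symmArr (I : SigIso L L') (A' : L'.S) (f' : L'.Arr A') :
    HEq ((I.arr (I.obj.symm A')) (symmArr I A' f')) f' := by
  have h1 : (I.arr (I.obj.symm A')) (symmArr I A' f')
      = (Equiv.cast (congrArg L'.Arr (I.obj.apply_symm_apply A'))).symm f' := by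
    rw [symmArr, Equiv.symm_trans_apply]
    exact (I.arr _).apply_symm_apply _
  rw [h1, ← Equiv.cast_symm, Equiv.cast_apply]
  exact cast_heq _ _

theorem symmArr_symm_apply (I : SigIso L L') (A' : L'.S)
    (x : L.Arr (I.obj.symm A')) :
    (symmArr I A' ).symm x = cast (congrArg L'.Arr (I.obj.apply_symm_apply A'))
      ((I.arr (I.obj.symm A')) x) := rfl

theorem symmArr_cod (I : SigIso L L') (A' : L'.S) (f' : L'.Arr A') :
    L.cod (symmArr I A' f') = I.obj.symm (L'.cod f') := by
  have h3 := I.cod_eq (I.obj.symm A') (symmArr I A' f')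
  have h4 : L'.cod ((I.arr (I.obj.symm A')) (symmArr I A' f')) = L'.cod f' :=
    cod_heq_congr L' (I.obj.apply_symm_apply A') (arr_symmArr I A' f')
  rw [h4] at h3
  rw [h3, Equiv.symm_apply_apply]

theorem symmArr_comp (I : SigIso L L') (A' : L'.S) (f' : L'.Arr A')
    (p' : L'.Arr (L'.cod f')) (q : L.Arr (L.cod (symmArr I A' f')))
    (hq : HEq (symmArr I (L'.cod f') p') q) :
    symmArr I A' (L'.comp f' p') = L.comp (symmArr I A' f') q := by
  set B := I.obj.symm A' with hB
  apply (I.arr B).injective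
  rw [comp_eq' I B (symmArr I A' f') q]
  apply eq_of_heq
  refine HEq.trans (arr_symmArr I A' (L'.comp f' p')) ?_
  refine HEq.symm (comp_heq_congr L' (I.obj.apply_symm_apply A')
    (arr_symmArr I A' f') ?_)
  refine HEq.trans (cast_heq _ _) ?_
  refine HEq.trans (arr_congr I (symmArr_cod I A' f') ?_) (arr_symmArr I (L'.cod f') p')
  exact hq.symm

def SigIso.symm (I : SigIso L L') : SigIso L' L where
  obj := I.obj.symm
  arr := symmArr I
  cod_eq := symmArr_cod I
  comp_eq := symmArr_comp I
  lt_iff A' B' := by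
    rw [I.lt_iff]
    rw [I.obj.apply_symm_apply, I.obj.apply_symm_apply]

theorem mapSort_symm_mapSort (I : SigIso L L') (K : SortExpr L) :
    mapSort (SigIso.symm I) (mapSort I K) = K := by
  rcases K with ⟨A, args⟩
  apply sortExprExt (I.obj.symm_apply_apply A)
  intro f
  show args ((I.arr A).symm ((symmArr I (I.obj A)).symm (cast _ f))) = args f
  congr 1
  apply (I.arr A).injective
  rw [Equiv.apply_symm_apply, symmArr_symm_apply]
  apply eq_of_heq
  refine HEq.trans (cast_heq _ _) ?_
  exact arr_congr I (I.obj.symm_apply_apply A) (cast_heq _ _)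

theorem mapSort_mapSort_symm (I : SigIso L L') (K : SortExpr L') :
    mapSort I (mapSort (SigIso.symm I) K) = K := by
  rcases K with ⟨A', args⟩
  apply sortExprExt (I.obj.apply_symm_apply A')
  intro q
  show args ((symmArr I A').symm ((I.arr (I.obj.symm A')).symm (cast _ q))) = args q
  congr 1
  rw [symmArr_symm_apply]
  apply eq_of_heq
  refine HEq.trans (cast_heq _ _) ?_
  refine HEq.trans (heq_of_eq ((I.arr _).apply_symm_apply _)) (cast_heq _ _)

theorem mapCon_symm_mapCon (I : SigIso L L') (Γ : FOLDSCon L) :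
    mapCon (SigIso.symm I) (mapCon I Γ) = Γ := by
  simp [mapCon, List.map_map, Function.comp_def, mapSort_symm_mapSort]

theorem mapCon_mapCon_symm (I : SigIso L L') (Γ : FOLDSCon L') :
    mapCon I (mapCon (SigIso.symm I) Γ) = Γ := by
  simp [mapCon, List.map_map, Function.comp_def, mapSort_mapSort_symm]

theorem mapFml_symm_mapFml (I : SigIso L L') (φ : Fml L) :
    mapFml (SigIso.symm I) (mapFml I φ) = φ := by
  induction φ <;> simp [mapFml, mapSort_symm_mapSort, *]

theorem mapFml_mapFml_symm (I : SigIso L L') (φ : Fml L') :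
    mapFml I (mapFml (SigIso.symm I) φ) = φ := by
  induction φ <;> simp [mapFml, mapSort_mapSort_symm, *]

end BiInterp

/-- If two FOLDS signatures `L` and `L'` are isomorphic as ordered
inverse categories, then their logical type theories `LTT_L` and `LTT_{L'}` are
bi-interpretable: there are interpretations in both directions (maps on sorts,
contexts and formulas sending derivable judgments to derivable judgments, with
contexts mapped declaration-wise) that are mutually inverse. -/
theorem iso_implies_biinterpretable (L L' : FOLDSSig) (I : SigIso L L') :
    ∃ (Fs : SortExpr L → SortExpr L') (Fc : FOLDSCon L → FOLDSCon L')
      (Ff : Fml L → Fml L')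
      (Gs : SortExpr L' → SortExpr L) (Gc : FOLDSCon L' → FOLDSCon L)
      (Gf : Fml L' → Fml L),
      (∀ Γ : FOLDSCon L, Fc Γ = Γ.map (fun p => (p.1, Fs p.2))) ∧
      (∀ Γ : FOLDSCon L', Gc Γ = Γ.map (fun p => (p.1, Gs p.2))) ∧
      -- mutually inverse
      (∀ K, Gs (Fs K) = K) ∧ (∀ K, Fs (Gs K) = K) ∧
      (∀ Γ, Gc (Fc Γ) = Γ) ∧ (∀ Γ, Fc (Gc Γ) = Γ) ∧
      (∀ φ, Gf (Ff φ) = φ) ∧ (∀ φ, Ff (Gf φ) = φ) ∧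
      -- every rule of each theory is admissible in the other: derivability of
      -- all judgment forms is preserved and reflected
      (∀ Γ, Derive L (.conOk Γ) ↔ Derive L' (.conOk (Fc Γ))) ∧
      (∀ Γ K, Derive L (.isSort Γ K) ↔ Derive L' (.isSort (Fc Γ) (Fs K))) ∧
      (∀ Γ x K, Derive L (.hasType Γ x K) ↔
        Derive L' (.hasType (Fc Γ) x (Fs K))) ∧
      (∀ Γ φ, IsFml L Γ φ ↔ IsFml L' (Fc Γ) (Ff φ)) := by
  open BiInterp in
  refine ⟨mapSort I, mapCon I, mapFml I, mapSort (SigIso.symm I),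
    mapCon (SigIso.symm I), mapFml (SigIso.symm I),
    fun _ => rfl, fun _ => rfl,
    mapSort_symm_mapSort I, mapSort_mapSort_symm I,
    mapCon_symm_mapCon I, mapCon_mapCon_symm I,
    mapFml_symm_mapFml I, mapFml_mapFml_symm I, ?_, ?_, ?_, ?_⟩
  · intro Γ
    constructor
    · exact fun h => derive_map I h
    · intro h
      have := derive_map (SigIso.symm I) h
      simpa [mapJud, mapCon_symm_mapCon] using this
  · intro Γ K
    constructor
    · exact fun h => derive_map I h
    · intro h
      have := derive_map (SigIso.symm I) h
      simpa [mapJud, mapCon_symm_mapCon, mapSort_symm_mapSort] using this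
  · intro Γ x K
    constructor
    · exact fun h => derive_map I h
    · intro h
      have := derive_map (SigIso.symm I) h
      simpa [mapJud, mapCon_symm_mapCon, mapSort_symm_mapSort] using this
  · intro Γ φ
    constructor
    · exact fun h => isFml_map I h
    · intro h
      have := isFml_map (SigIso.symm I) h
      rwa [mapCon_symm_mapCon, mapFml_symm_mapFml] at this
end

section
/- The type of precategories is equivalent to the type of models of the first-order FOL≅ theory of precategories: PreCat ≃ Mod(T_precat). In particular, given a relational model (with composition and identity as mere relations satisfying existence, functionality, uniqueness of identity, associativity, and unit axioms), the axiom of unique choice produces composition and identity operations, and conversely every precategory yields a relational model; these constructions are quasi-inverse. -/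
/-! Precategories and the relational models of the FOL≅ theory `T_precat` of
precategories. Mere propositions are rendered as `Prop`; the h-set condition
on hom-types is rendered as uniqueness of identity proofs; the truncated
existentials of the theory are rendered by `∃`. -/

structure Precat where
  Obj : Type
  Hom : Obj → Obj → Type
  hset : ∀ (a b : Obj) (f g : Hom a b) (p q : f = g), p = q
  id : ∀ a : Obj, Hom a a
  comp : ∀ {a b c : Obj}, Hom a b → Hom b c → Hom a c
  assoc : ∀ {a b c d : Obj} (f : Hom a b) (g : Hom b c) (h : Hom c d),
    comp f (comp g h) = comp (comp f g) h
  idl : ∀ {a b : Obj} (f : Hom a b), comp (id a) f = f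
  idr : ∀ {a b : Obj} (f : Hom a b), comp f (id b) = f

/-- A model of the FOL≅ theory `T_precat`: identity and composition are mere
relations (`I`, `c`) satisfying existence of identities, totality and
functionality of composition, associativity, uniqueness of identities, and
the unit laws. -/
structure PrecatModel where
  O : Type
  A : O → O → Type
  hset : ∀ (x y : O) (f g : A x y) (p q : f = g), p = q
  I : ∀ x : O, A x x → Prop
  c : ∀ {x y z : O}, A x y → A y z → A x z → Prop
  t1 : ∀ x : O, ∃ i : A x x, I x i
  t2 : ∀ {x y z : O} (f : A x y) (g : A y z), ∃ h : A x z, c f g h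
  t3 : ∀ {x y z : O} (f : A x y) (g : A y z) (h h' : A x z),
    c f g h → c f g h' → h = h'
  t4 : ∀ {x y z w : O} (f : A x y) (g : A y z) (h : A z w)
    (i : A x z) (j : A x w) (k : A y w),
    c f g i → c i h j → c g h k → c f k j
  t5 : ∀ (x : O) (i j : A x x), I x i → I x j → i = j
  t6 : ∀ {x y : O} (i : A x x) (g : A x y), I x i → c i g g
  t7 : ∀ {x y : O} (i : A y y) (f : A x y), I y i → c f i f

noncomputable def toPrecat (M : PrecatModel) : Precat where
  Obj := M.O
  Hom := M.A
  hset := M.hset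
  id x := (M.t1 x).choose
  comp f g := (M.t2 f g).choose
  assoc {a b c d} f g h := by
    apply M.t3 f ((M.t2 g h).choose)
    · exact (M.t2 f _).choose_spec
    · exact M.t4 f g h (M.t2 f g).choose _ (M.t2 g h).choose
        (M.t2 f g).choose_spec (M.t2 _ h).choose_spec (M.t2 g h).choose_spec
  idl {a b} f := M.t3 _ f _ f (M.t2 _ f).choose_spec
    (M.t6 _ f (M.t1 a).choose_spec)
  idr {a b} f := M.t3 f _ _ f (M.t2 f _).choose_spec
    (M.t7 _ f (M.t1 b).choose_spec)

def toModel (P : Precat) : PrecatModel where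
  O := P.Obj
  A := P.Hom
  hset := P.hset
  I x i := i = P.id x
  c f g h := h = P.comp f g
  t1 x := ⟨P.id x, rfl⟩
  t2 f g := ⟨P.comp f g, rfl⟩
  t3 f g h h' p q := p.trans q.symm
  t4 f g h i j k p q r := by subst p q r; exact (P.assoc f g h).symm
  t5 x i j p q := p.trans q.symm
  t6 i g p := by subst p; exact (P.idl g).symm
  t7 i f p := by subst p; exact (P.idr f).symm

/-- The type of precategories is equivalent to the type of
models of the first-order FOL≅ theory of precategories:
`PreCat ≃ Mod(T_precat)`. (From a relational model, the axiom of unique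
choice produces the composition and identity operations; conversely every
precategory yields a relational model; the two constructions are
quasi-inverse, giving the equivalence.) -/
theorem precat_equiv_models_T_precat : Nonempty (Precat ≃ PrecatModel) := by
  refine ⟨{ toFun := toModel, invFun := toPrecat, left_inv := ?_, right_inv := ?_ }⟩
  · rintro ⟨O, H, hs, id, comp, a, l, r⟩
    have hid : ∀ x, ((toModel ⟨O, H, hs, id, comp, a, l, r⟩).t1 x).choose = id x :=
      fun x => ((toModel ⟨O, H, hs, id, comp, a, l, r⟩).t1 x).choose_spec
    simp only [toPrecat, toModel, Precat.mk.injEq, heq_eq_eq, true_and]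
    congr 1
    · funext x; exact hid x
    · funext x y z f g
      exact ((toModel ⟨O, H, hs, id, comp, a, l, r⟩).t2 f g).choose_spec
  · rintro ⟨O, A, hs, I, c, t1, t2, t3, t4, t5, t6, t7⟩
    simp only [toPrecat, toModel, PrecatModel.mk.injEq, heq_eq_eq, true_and]
    congr 1
    · funext x i
      apply propext
      constructor
      · intro h; rw [h]; exact (t1 x).choose_spec
      · intro h; exact t5 x i _ h ((t1 x).choose_spec)
    · funext x y z f g h
      apply propext
      constructor
      · intro hh; rw [hh]; exact (t2 f g).choose_spec
      · intro hh; exact t3 f g h _ hh ((t2 f g).choose_spec)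
end
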